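/- Suppose w : (0,∞) × [μ,∞) → ℝ is continuous, is continuously differentiable on (0,∞) × (μ,∞) where it satisfies the partial differential equation β x y ∂ₓw(x,y) + (γ − β x) y ∂_y w(x,y) = 1, and satisfies the boundary condition w(x, μ) = 0 for all x ∈ (0, γ/β]. Then for every x > 0 and y > μ, w(x, y) = u(x, y), the first hitting time of the threshold μ for the SIR solution with initial data (x, y). In particular, such a solution w of the boundary-value problem is unique. -/

import Mathlib

open Set Filter

/-- An SIR solution with parameters β, γ and initial data (x, y):
differentiable functions S, I on [0,∞) with S' = -βSI, I' = βSI - γI,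
S(0) = x, I(0) = y. -/
def IsSIRSolution (β γ x y : ℝ) (S I : ℝ → ℝ) : Prop :=
  S 0 = x ∧ I 0 = y ∧
  ∀ t, 0 ≤ t →
    HasDerivWithinAt S (-(β * S t * I t)) (Set.Ici 0) t ∧
    HasDerivWithinAt I (β * S t * I t - γ * I t) (Set.Ici 0) t

/-!
The SIR vector field `(-β S I, β S I - γ I)` is the negative of the characteristic field
`(β x y, (γ - β x) y)` of the PDE, so along the trajectory `t ↦ w (S t, I t) + t` is constant
and `w (x, y) = w (S u, I u) + u`. At the hitting time `I u = μ`; since `I` attains its minimum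
over `[0, u]` at `u`, `I' u = μ (β S u - γ) ≤ 0`, i.e. `S u ≤ γ / β`, and `S u > 0` by the
integrating factor `exp (β ∫ I)`. So the boundary condition gives `w (S u, μ) = 0`.
-/

open Real

theorem mul_exp_neg_integral_eq_of_hasDerivWithinAt {f k : ℝ → ℝ} {a : ℝ}
    (hk : ContinuousOn k (Ici a))
    (hf : ∀ t ∈ Ici a, HasDerivWithinAt f (k t * f t) (Ici a) t) {T : ℝ} (hT : a ≤ T) :
    f T * exp (-∫ s in a..T, k s) = f a := by
  set E : ℝ → ℝ := fun t => f t * exp (-∫ s in a..t, k s)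
  have hk_int : ∀ t ∈ Ici a, IntervalIntegrable k MeasureTheory.volume a t := fun t ht =>
    (hk.mono fun s hs => (uIcc_of_le ht.out ▸ hs).1).intervalIntegrable
  have hE_cont : ContinuousOn E (Icc a T) := by
    have hprim_cont :=
      intervalIntegral.continuousOn_primitive_interval' (hk_int T hT) left_mem_uIcc
    rw [uIcc_of_le hT] at hprim_cont
    have hf_cont : ContinuousOn f (Icc a T) := fun t ht =>
      (hf t ht.1).continuousWithinAt.mono Icc_subset_Ici_self
    exact hf_cont.mul hprim_cont.neg.rexp
  have hE_deriv : ∀ t ∈ Ico a T, HasDerivWithinAt E 0 (Ici t) t := by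
    intro t ht
    have hIoi : Ioi t ⊆ Ici a := fun s hs => ht.1.trans hs.out.le
    have hprim : HasDerivWithinAt (fun t => ∫ s in a..t, k s) (k t) (Ici t) t :=
      intervalIntegral.integral_hasDerivWithinAt_right (hk_int t ht.1)
        ((hk.stronglyMeasurableAtFilter_nhdsWithin measurableSet_Ici t).filter_mono
          (nhdsWithin_mono t hIoi))
        ((hk t ht.1).mono hIoi)
    have hexp : HasDerivWithinAt (fun t => exp (-∫ s in a..t, k s))
        (exp (-∫ s in a..t, k s) * -k t) (Ici t) t := hprim.neg.exp
    exact (((hf t ht.1).mono (Ici_subset_Ici.2 ht.1)).mul hexp).congr_deriv (by ring)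
  simpa [E] using constant_of_has_deriv_right_zero hE_cont hE_deriv T ⟨hT, le_rfl⟩

theorem pos_of_hasDerivWithinAt_eq_mul {f k : ℝ → ℝ} {a : ℝ} (hk : ContinuousOn k (Ici a))
    (hf : ∀ t ∈ Ici a, HasDerivWithinAt f (k t * f t) (Ici a) t) (ha : 0 < f a)
    {T : ℝ} (hT : a ≤ T) : 0 < f T := by
  have h := mul_exp_neg_integral_eq_of_hasDerivWithinAt hk hf hT
  exact pos_of_mul_pos_left (h ▸ ha) (exp_pos _).le

theorem HasDerivWithinAt.nonpos_of_isMinOn_Icc {f : ℝ → ℝ} {f' a b : ℝ} (hab : a < b)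
    (hf : HasDerivWithinAt f f' (Icc a b) b) (hmin : IsMinOn f (Icc a b) b) : f' ≤ 0 := by
  have hcone : a - b ∈ posTangentConeAt (Icc a b) b :=
    sub_mem_posTangentConeAt_of_segment_subset (by rw [segment_symm, segment_eq_Icc hab.le])
  have h := hmin.localize.hasFDerivWithinAt_nonneg hf.hasFDerivWithinAt hcone
  rw [ContinuousLinearMap.toSpanSingleton_apply, smul_eq_mul] at h
  nlinarith

theorem IsLeast.apply_eq_of_continuousOn {f : ℝ → ℝ} {a c u : ℝ} (hf : ContinuousOn f (Ici a))
    (ha : c < f a) (hu : IsLeast {t | a ≤ t ∧ f t ≤ c} u) : f u = c := by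
  obtain ⟨⟨hau, hfu⟩, hleast⟩ := hu
  refine hfu.antisymm (not_lt.1 fun hlt => ?_)
  obtain ⟨s, hs, hfs⟩ := intermediate_value_Icc' hau (hf.mono Icc_subset_Ici_self)
    ⟨hfu, ha.le⟩
  have : s = u := hs.2.antisymm (hleast ⟨hs.1, hfs.le⟩)
  exact hlt.ne (this ▸ hfs)

theorem ContinuousLinearMap.apply_prodMk_eq (L : ℝ × ℝ →L[ℝ] ℝ) (a b : ℝ) :
    L (a, b) = a * L (1, 0) + b * L (0, 1) := by
  have hab : ((a, b) : ℝ × ℝ) = a • ((1 : ℝ), (0 : ℝ)) + b • ((0 : ℝ), (1 : ℝ)) := by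
    simp
  rw [hab, map_add, map_smul, map_smul, smul_eq_mul, smul_eq_mul]

namespace IsSIRSolution

variable {β γ x y : ℝ} {S I : ℝ → ℝ}

theorem continuousOn_S (h : IsSIRSolution β γ x y S I) : ContinuousOn S (Ici 0) :=
  fun t ht => (h.2.2 t ht).1.continuousWithinAt

theorem continuousOn_I (h : IsSIRSolution β γ x y S I) : ContinuousOn I (Ici 0) :=
  fun t ht => (h.2.2 t ht).2.continuousWithinAt

theorem S_pos (h : IsSIRSolution β γ x y S I) (hx : 0 < x) {t : ℝ} (ht : 0 ≤ t) : 0 < S t :=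
  pos_of_hasDerivWithinAt_eq_mul (k := fun t => -(β * I t))
    (continuousOn_const.mul h.continuousOn_I).neg
    (fun t ht => (h.2.2 t ht).1.congr_deriv (by ring)) (h.1 ▸ hx) ht

theorem apply_eq_apply_add_of_pde (h : IsSIRSolution β γ x y S I) {w : ℝ × ℝ → ℝ}
    {U K : Set (ℝ × ℝ)} (hU : IsOpen U) (hw_cont : ContinuousOn w K)
    (hw_diff : DifferentiableOn ℝ w U)
    (hw_pde : ∀ p ∈ U, β * p.1 * p.2 * fderiv ℝ w p (1, 0) +
      (γ - β * p.1) * p.2 * fderiv ℝ w p (0, 1) = 1)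
    {T : ℝ} (hT : 0 ≤ T) (hU_traj : ∀ t ∈ Ico 0 T, (S t, I t) ∈ U)
    (hK_traj : ∀ t ∈ Icc 0 T, (S t, I t) ∈ K) :
    w (x, y) = w (S T, I T) + T := by
  set g : ℝ → ℝ := fun t => w (S t, I t) + t
  have hg_cont : ContinuousOn g (Icc 0 T) :=
    (hw_cont.comp ((h.continuousOn_S.prodMk h.continuousOn_I).mono Icc_subset_Ici_self)
      hK_traj).add continuousOn_id
  have hg_deriv : ∀ t ∈ Ico 0 T, HasDerivWithinAt g 0 (Ici t) t := by
    intro t ht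
    obtain ⟨hS, hI⟩ := h.2.2 t ht.1
    have hp := hU_traj t ht
    have hw : HasFDerivAt w (fderiv ℝ w (S t, I t)) (S t, I t) :=
      (hw_diff.differentiableAt (hU.mem_nhds hp)).hasFDerivAt
    have htraj := (hS.prodMk hI).mono (Ici_subset_Ici.2 ht.1)
    refine ((hw.comp_hasDerivWithinAt t htraj).add (hasDerivWithinAt_id t _)).congr_deriv ?_
    rw [ContinuousLinearMap.apply_prodMk_eq]
    linear_combination -hw_pde _ hp
  have := constant_of_has_deriv_right_zero hg_cont hg_deriv T ⟨hT, le_rfl⟩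
  simpa [g, h.1, h.2.1] using this.symm

end IsSIRSolution

theorem stmt_10_general (β γ μ : ℝ) (hβ : 0 < β) (hμ : 0 < μ)
    (w : ℝ × ℝ → ℝ)
    (hw_cont : ContinuousOn w (Set.Ioi 0 ×ˢ Set.Ici μ))
    (hw_diff : ContDiffOn ℝ 1 w (Set.Ioi 0 ×ˢ Set.Ioi μ))
    (hw_pde : ∀ p ∈ (Set.Ioi (0:ℝ)) ×ˢ (Set.Ioi μ),
      β * p.1 * p.2 * fderiv ℝ w p (1, 0) +
        (γ - β * p.1) * p.2 * fderiv ℝ w p (0, 1) = 1)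
    (hw_bc : ∀ x ∈ Set.Ioc (0:ℝ) (γ / β), w (x, μ) = 0)
    (x y : ℝ) (hx : 0 < x) (hy : μ < y)
    (S I : ℝ → ℝ) (hSI : IsSIRSolution β γ x y S I)
    (u : ℝ) (hu : IsLeast {t : ℝ | 0 ≤ t ∧ I t ≤ μ} u) :
    w (x, y) = u := by
  have hIu : I u = μ := hu.apply_eq_of_continuousOn hSI.continuousOn_I (hSI.2.1 ▸ hy)
  have hI_gt : ∀ t ∈ Ico 0 u, μ < I t := fun t ht =>
    not_le.1 fun hle => ht.2.not_ge (hu.2 ⟨ht.1, hle⟩)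
  have hu_pos : 0 < u := hu.1.1.lt_of_ne fun h0 => hy.ne' (hSI.2.1 ▸ h0 ▸ hIu)
  have hI_ge : ∀ t ∈ Icc 0 u, μ ≤ I t := fun t ht =>
    ht.2.eq_or_lt.elim (fun h => h ▸ hIu.ge) fun h => (hI_gt t ⟨ht.1, h⟩).le
  have hSu : S u ≤ γ / β := by
    have h := ((hSI.2.2 u hu.1.1).2.mono Icc_subset_Ici_self).nonpos_of_isMinOn_Icc
      hu_pos fun t ht => hIu.trans_le (hI_ge t ht)
    rw [hIu] at h
    rw [le_div_iff₀ hβ]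
    nlinarith
  have hchar := hSI.apply_eq_apply_add_of_pde (isOpen_Ioi.prod isOpen_Ioi) hw_cont
    (hw_diff.differentiableOn one_ne_zero) hw_pde hu.1.1
    (fun t ht => ⟨hSI.S_pos hx ht.1, hI_gt t ht⟩) (fun t ht => ⟨hSI.S_pos hx ht.1, hI_ge t ht⟩)
  rw [hchar, hIu, hw_bc _ ⟨hSI.S_pos hx hu.1.1, hSu⟩, zero_add]

theorem stmt_10 (β γ μ : ℝ) (hβ : 0 < β) (hγ : 0 < γ) (hμ : 0 < μ)
    (w : ℝ × ℝ → ℝ)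
    (hw_cont : ContinuousOn w (Set.Ioi 0 ×ˢ Set.Ici μ))
    (hw_diff : ContDiffOn ℝ 1 w (Set.Ioi 0 ×ˢ Set.Ioi μ))
    (hw_pde : ∀ p ∈ (Set.Ioi (0:ℝ)) ×ˢ (Set.Ioi μ),
      β * p.1 * p.2 * fderiv ℝ w p (1, 0) +
        (γ - β * p.1) * p.2 * fderiv ℝ w p (0, 1) = 1)
    (hw_bc : ∀ x ∈ Set.Ioc (0:ℝ) (γ / β), w (x, μ) = 0)
    (x y : ℝ) (hx : 0 < x) (hy : μ < y)
    (S I : ℝ → ℝ) (hSI : IsSIRSolution β γ x y S I)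
    (u : ℝ) (hu : IsLeast {t : ℝ | 0 ≤ t ∧ I t ≤ μ} u) :
    w (x, y) = u :=
  stmt_10_general β γ μ hβ hμ w hw_cont hw_diff hw_pde hw_bc x y hx hy S I hSI u hu
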